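/- arXiv:2001.03261 — 4 statements merged into one kernel-verified Lean document; each statement's English description precedes it below -/
import Mathlib

section
/- Suppose ρ is a nonnegative real-valued function on diagrams satisfying: ρ(Δ) = ρ(Δ₁) + ρ(Δ₂) whenever Δ is cut into Δ₁ and Δ₂. If p, u, t are nonnegative reals with u ≤ 3γ·t, t ≤ (19/20)·p, ρ(Δ₁) ≤ (t+u)², and ρ(Δ₂) ≤ (p - t + u)², and γ satisfies (1+3γ)² + (1-3γ)² ≤ (40/19)(1-3γ), then ρ(Δ) ≤ p². -/
/-- Abstract inductive step (Case 1) of the quadratic mass bound: if `ρΔ = ρ₁ + ρ₂`,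
`u ≤ 3γt`, `t ≤ (19/20)p`, `ρ₁ ≤ (t+u)²`, `ρ₂ ≤ (p-t+u)²`, and γ satisfies the
quadratic constraint, then `ρΔ ≤ p²`. -/
theorem mass_inductive_step (γ p u t ρΔ ρ₁ ρ₂ : ℝ)
    (hsplit : ρΔ = ρ₁ + ρ₂) (hρ₁ : 0 ≤ ρ₁) (hρ₂ : 0 ≤ ρ₂)
    (hp : 0 ≤ p) (hu : 0 ≤ u) (ht : 0 ≤ t)
    (huγ : u ≤ 3 * γ * t) (htp : t ≤ (19 / 20) * p)
    (h₁ : ρ₁ ≤ (t + u) ^ 2) (h₂ : ρ₂ ≤ (p - t + u) ^ 2)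
    (hγ : (1 + 3 * γ) ^ 2 + (1 - 3 * γ) ^ 2 ≤ (40 / 19) * (1 - 3 * γ)) :
    ρΔ ≤ p ^ 2 := by
  have htu : 0 ≤ t + u := by linarith
  have hptu : 0 ≤ p - t + u := by linarith
  have e₁ : (t + u) ^ 2 ≤ ((1 + 3 * γ) * t) ^ 2 := by nlinarith
  have e₂ : (p - t + u) ^ 2 ≤ (p - (1 - 3 * γ) * t) ^ 2 := by nlinarith
  -- key: ((1+g)² + (1-g)²) * t ≤ 2 * (1-g) * p
  have key : ((1 + 3 * γ) ^ 2 + (1 - 3 * γ) ^ 2) * t ≤ 2 * (1 - 3 * γ) * p := by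
    have h0 : 0 ≤ (1 + 3 * γ) ^ 2 + (1 - 3 * γ) ^ 2 := by positivity
    calc ((1 + 3 * γ) ^ 2 + (1 - 3 * γ) ^ 2) * t
        ≤ ((40 / 19) * (1 - 3 * γ)) * ((19 / 20) * p) := by nlinarith
      _ = 2 * (1 - 3 * γ) * p := by ring
  nlinarith [mul_le_mul_of_nonneg_right key ht]
end

section
/- Let w, v be elements of a free group F(Y) and suppose a sequence u₀ = w, u₁, …, u_t = v is obtained where each step passes from u_j to u_{j+1} by left multiplication by a single generator or its inverse followed by free reduction, with distinct steps multiplying by distinct letters and the whole sequence of multiplying letters forming a reduced word H. Then t = ‖H‖ ≤ ‖u₀‖ + ‖u_t‖, and ‖u_j‖ ≤ max(‖u₀‖, ‖u_t‖) for every j; moreover if u₀ = u_t then t = 0. -/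
namespace MOL
open FreeGroup

variable {Y : Type*} [DecidableEq Y]

lemma reduce_map_flip (l : List (Y × Bool)) :
    FreeGroup.reduce (l.map (fun p => (p.1, !p.2))) =
      (FreeGroup.reduce l).map (fun p => (p.1, !p.2)) := by
  induction l with
  | nil => rfl
  | cons x l ih =>
    rw [List.map_cons, FreeGroup.reduce.cons, FreeGroup.reduce.cons, ih]
    cases h : FreeGroup.reduce l with
    | nil => rfl
    | cons hd tl =>
      simp only [List.map_cons]
      by_cases hc : x.1 = hd.1 ∧ x.2 = !hd.2
      · rw [if_pos ⟨hc.1, by simp [hc.2]⟩, if_pos hc]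
      · rw [if_neg (by simpa using hc), if_neg hc, List.map_cons, List.map_cons]

lemma reduce_reverse_of {L : List (Y × Bool)} (h : FreeGroup.reduce L = L) :
    FreeGroup.reduce L.reverse = L.reverse := by
  have h1 : L.reverse = FreeGroup.invRev (L.map (fun p => (p.1, !p.2))) := by
    simp [FreeGroup.invRev, Function.comp_def]
  rw [h1, FreeGroup.reduce_invRev, reduce_map_flip, h]

lemma reduce_cons_of_reduced (x : Y × Bool) (w : List (Y × Bool))
    (hw : FreeGroup.reduce w = w) :
    FreeGroup.reduce (x :: w) = x :: w ∨
      (w = (x.1, !x.2) :: FreeGroup.reduce (x :: w)) := by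
  rw [FreeGroup.reduce.cons, hw]
  cases w with
  | nil => left; rfl
  | cons hd tl =>
    dsimp only
    by_cases hc : x.1 = hd.1 ∧ x.2 = !hd.2
    · right
      rw [if_pos hc]
      have : hd = (x.1, !x.2) := by
        obtain ⟨h1, h2⟩ := hc
        cases hd; cases x; simp_all
      rw [this]
    · left; rw [if_neg hc]

lemma no_cancel {L : List (Y × Bool)} (h : FreeGroup.reduce L = L)
    (j : ℕ) (hj : j + 1 < L.length) : L[j + 1] ≠ (L[j].1, !L[j].2) := by
  intro he
  apply FreeGroup.reduce.not (L₁ := L) (L₂ := L.take j) (L₃ := L.drop (j+2))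
    (x := L[j].1) (b := L[j].2)
  rw [h]
  conv_lhs => rw [← List.take_append_drop j L]
  rw [List.drop_eq_getElem_cons (by omega), List.drop_eq_getElem_cons hj]
  simp [he]

end MOL


/-- Lemma 'multiply one letter': for a computation multiplying a sector on the left by single
letters, with distinct steps multiplying by distinct letters so that the sequence of
multiplying letters forms a reduced word `H = L`, the length `t = ‖H‖` of the computation is
at most `‖u₀‖ + ‖u_t‖`, every intermediate word satisfies `‖u_j‖ ≤ max(‖u₀‖, ‖u_t‖)`, and if
`u₀ = u_t` the computation is empty. -/
theorem multiply_one_letter (Y : Type*) [DecidableEq Y] (L : List (Y × Bool))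
    (hred : FreeGroup.reduce L = L)
    (u : Fin (L.length + 1) → FreeGroup Y)
    (hstep : ∀ j : Fin L.length, u j.succ = FreeGroup.mk [L.get j] * u j.castSucc) :
    (L.length ≤ (u 0).toWord.length + (u (Fin.last L.length)).toWord.length) ∧
    (∀ j, (u j).toWord.length ≤
        max (u 0).toWord.length (u (Fin.last L.length)).toWord.length) ∧
    (u 0 = u (Fin.last L.length) → L.length = 0) := by
  classical
  have hlt : ∀ j : ℕ, min j L.length < L.length + 1 := fun j => by omega
  set w : ℕ → List (Y × Bool) := fun j => (u ⟨min j L.length, hlt j⟩).toWord with hwdef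
  have hwj : ∀ j : Fin (L.length + 1), w j.val = (u j).toWord := by
    intro j
    have hj : (⟨min j.val L.length, hlt j.val⟩ : Fin (L.length + 1)) = j := by
      apply Fin.ext; simp; omega
    simp only [hwdef, hj]
  have hw0 : w 0 = (u 0).toWord := hwj 0
  have hwn : w L.length = (u (Fin.last L.length)).toWord := hwj (Fin.last L.length)
  have hredw : ∀ j, FreeGroup.reduce (w j) = w j := fun j => FreeGroup.reduce_toWord _
  have hstepw : ∀ j, (hj : j < L.length) → w (j+1) = FreeGroup.reduce (L[j] :: w j) := by
    intro j hj
    have hc : (⟨j, hj⟩ : Fin L.length).castSucc = ⟨min j L.length, hlt j⟩ := by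
      apply Fin.ext; simp; omega
    have hs : (⟨j, hj⟩ : Fin L.length).succ = ⟨min (j+1) L.length, hlt (j+1)⟩ := by
      apply Fin.ext; simp; omega
    have hcs : u (⟨j, hj⟩ : Fin L.length).castSucc = FreeGroup.mk (w j) := by
      rw [hc, hwdef]; exact (FreeGroup.mk_toWord).symm
    have h1 := hstep ⟨j, hj⟩
    rw [hcs, FreeGroup.mul_mk] at h1
    show (u ⟨min (j+1) L.length, hlt (j+1)⟩).toWord = _
    rw [← hs, h1, FreeGroup.toWord_mk]
    rfl
  -- dichotomy
  have D : ∀ j, (hj : j < L.length) →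
      w (j+1) = L[j] :: w j ∨ w j = (L[j].1, !L[j].2) :: w (j+1) := by
    intro j hj
    rcases MOL.reduce_cons_of_reduced L[j] (w j) (hredw j) with h | h
    · left; rw [hstepw j hj, h]
    · right; rw [← hstepw j hj] at h; exact h
  set Inc : ℕ → Prop := fun j => ∃ x, w (j+1) = x :: w j with hIncdef
  have hIncCons : ∀ j, (hj : j < L.length) → Inc j → w (j+1) = L[j] :: w j := by
    intro j hj ⟨x, hx⟩
    rcases D j hj with h | h
    · exact h
    · exfalso
      have h1 : (w (j+1)).length = (w j).length + 1 := by rw [hx]; simp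
      have h2 : (w j).length = (w (j+1)).length + 1 := by rw [h]; simp
      omega
  have hpersist : ∀ j, j + 1 < L.length → Inc j → Inc (j+1) := by
    intro j hj hInc
    have hcons := hIncCons j (by omega) hInc
    rcases D (j+1) hj with h | h
    · exact ⟨_, h⟩
    · exfalso
      rw [hcons] at h
      have heq : L[j] = (L[j+1].1, !L[j+1].2) := (List.cons.injEq _ _ _ _ ▸ h).1
      apply MOL.no_cancel hred j hj
      have h1 : L[j+1].1 = L[j].1 := by rw [heq]
      have h2 : L[j+1].2 = !L[j].2 := by rw [heq]; simp
      cases hLj : L[j+1]; simp_all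
  have hclosure : ∀ i k, i ≤ k → k < L.length → Inc i → Inc k := by
    intro i k hik hk hInc
    induction k, hik using Nat.le_induction with
    | base => exact hInc
    | succ k hik ih => exact hpersist k hk (ih (by omega))
  have hdec : ∀ j, j ≤ L.length → (∀ i, i < j → ¬ Inc i) →
      (w j).length + j = (w 0).length := by
    intro j
    induction j with
    | zero => simp
    | succ j ih =>
      intro hjn hni
      have hj : j < L.length := by omega
      have := ih (by omega) (fun i hi => hni i (by omega))
      rcases D j hj with h | h
      · exact absurd ⟨_, h⟩ (hni j (by omega))
      · have : (w j).length = (w (j+1)).length + 1 := by rw [h]; simp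
        omega
  have hinc : ∀ d j, j + d = L.length → (∀ i, j ≤ i → i < L.length → Inc i) →
      (w L.length).length = (w j).length + d := by
    intro d
    induction d with
    | zero => intro j hj _; simp [show j = L.length by omega]
    | succ d ih =>
      intro j hj hi
      have h1 : (w (j+1)).length = (w j).length + 1 := by
        rw [hIncCons j (by omega) (hi j le_rfl (by omega))]; simp
      have := ih (j+1) (by omega) (fun i h1 h2 => hi i (by omega) h2)
      omega
  have hw0n : ∀ j : Fin (L.length + 1),
      (u j).toWord.length ≤ max (u 0).toWord.length (u (Fin.last L.length)).toWord.length ∧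
      L.length ≤ (u 0).toWord.length + (u (Fin.last L.length)).toWord.length := by
    intro j
    rw [← hw0, ← hwn, ← hwj j]
    by_cases hS : ∃ k, k < L.length ∧ Inc k
    · set j0 := Nat.find hS with hj0def
      obtain ⟨hj0n, hj0inc⟩ := Nat.find_spec hS
      have hmin : ∀ i, i < j0 → ¬ Inc i := by
        intro i hi hInc
        exact Nat.find_min hS hi ⟨by omega, hInc⟩
      have hA : (w j0).length + j0 = (w 0).length := hdec j0 (by omega) hmin
      have hB : (w L.length).length = (w j0).length + (L.length - j0) :=
        hinc (L.length - j0) j0 (by omega) (fun i h1 h2 => hclosure j0 i h1 h2 hj0inc)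
      constructor
      · rcases le_or_gt j.val j0 with hle | hlt2
        · have := hdec j.val (by omega) (fun i hi => hmin i (by omega))
          have := le_max_left (w 0).length (w L.length).length
          omega
        · have := hinc (L.length - j.val) j.val (by omega)
            (fun i h1 h2 => hclosure j0 i (by omega) h2 hj0inc)
          have := le_max_right (w 0).length (w L.length).length
          omega
      · omega
    · push_neg at hS
      have hall : ∀ i, i < L.length → ¬ Inc i := fun i hi hInc => hS i hi hInc
      have hjd := hdec j.val (by omega) (fun i hi => hall i (by omega))
      have hnd := hdec L.length le_rfl hall
      have := le_max_left (w 0).length (w L.length).length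
      constructor
      · omega
      · omega
  refine ⟨(hw0n 0).2, fun j => (hw0n j).1, ?_⟩
  -- part 3
  intro h0t
  have htake : ∀ j : Fin (L.length + 1),
      u j = FreeGroup.mk ((L.take j.val).reverse) * u 0 := by
    intro j
    induction j using Fin.induction with
    | zero => simp [← FreeGroup.one_eq_mk]
    | succ i ih =>
      rw [hstep i, ih, ← mul_assoc, FreeGroup.mul_mk]
      congr 2
      rw [Fin.val_succ, Fin.coe_castSucc, List.take_succ,
        List.getElem?_eq_getElem i.isLt, Option.toList_some, List.reverse_append,
        List.reverse_singleton, List.singleton_append, List.get_eq_getElem]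
      rfl
  have hlast := htake (Fin.last L.length)
  rw [← h0t] at hlast
  have h1 : FreeGroup.mk ((L.take L.length).reverse) = 1 := by
    have h2 := mul_right_cancel (a := FreeGroup.mk ((L.take L.length).reverse))
      (b := u 0) (c := 1)
    rw [one_mul] at h2
    exact h2 hlast.symm
  have h2 : FreeGroup.reduce ((L.take L.length).reverse) = [] := by
    rw [← FreeGroup.toWord_mk, h1, FreeGroup.toWord_one]
  rw [MOL.reduce_reverse_of (by rw [show L.take L.length = L by simp]; exact hred)] at h2
  have h3 := congrArg List.length h2
  simpa using h3
end

section
/- Let G and H be finitely presented groups with Dehn functions δ_G and δ_H. Then the Dehn function of the direct product satisfies δ_{G×H}(n) ≼ n² + δ_G(n) + δ_H(n), where ≼ is the standard asymptotic comparison of Dehn functions. -/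
/-- `w` is a product of `k` conjugates of relators of `rels` or their inverses. -/
def AreaRep {α : Type*} (rels : Set (FreeGroup α)) (w : FreeGroup α) (k : ℕ) : Prop :=
  ∃ (f r : Fin k → FreeGroup α) (ε : Fin k → ℤ),
    (∀ i, r i ∈ rels) ∧ (∀ i, ε i = 1 ∨ ε i = -1) ∧
    w = (List.ofFn fun i => f i * r i ^ ε i * (f i)⁻¹).prod

/-- The area of a word representing the identity: the minimal number of conjugates of
relators needed to express it. -/
noncomputable def GArea {α : Type*} (rels : Set (FreeGroup α)) (w : FreeGroup α) : ℕ :=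
  sInf {k | AreaRep rels w k}

/-- The Dehn function of the presentation `⟨α ∣ rels⟩`. -/
noncomputable def DehnFunction (α : Type*) [DecidableEq α] (rels : Set (FreeGroup α))
    (n : ℕ) : ℕ :=
  sSup {a | ∃ w : FreeGroup α,
    (FreeGroup.toWord w).length ≤ n ∧ (∃ k, AreaRep rels w k) ∧ a = GArea rels w}

def DehnPreceq (f g : ℕ → ℕ) : Prop :=
  ∃ C : ℕ, 0 < C ∧ ∀ n, f n ≤ C * g (C * n) + C * n + C

/-- The relations of the product presentation of `G × H`: the relators of `G`, the relators
of `H`, and the commutators of generators of `G` with generators of `H`. -/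
def ProdRels (α β : Type*) (R : Set (FreeGroup α)) (S : Set (FreeGroup β)) :
    Set (FreeGroup (α ⊕ β)) :=
  (⇑(FreeGroup.map Sum.inl) '' R) ∪ (⇑(FreeGroup.map Sum.inr) '' S) ∪
    {x | ∃ (a : α) (b : β),
      x = FreeGroup.of (Sum.inl a) * FreeGroup.of (Sum.inr b) *
          (FreeGroup.of (Sum.inl a))⁻¹ * (FreeGroup.of (Sum.inr b))⁻¹}

/-!
Project a null-homotopic word `w` over `α ⊕ β` onto the two factors, `u = w|α` and `v = w|β`.
Both projections are null-homotopic in their own presentations and no longer than `w`, so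
`u` and `v` have area at most `δ_G(n)` and `δ_H(n)`. The remaining defect `w (u v)⁻¹` is
filled with commutator relators: moving a `β`-letter of `w` to the right past the at most
`n` `α`-letters that follow it costs at most `n` commutator cells, so `n²` cells in total.
-/

open FreeGroup
open scoped commutatorElement

variable {α β γ : Type*}

def IsConjRelator (rels : Set (FreeGroup α)) (x : FreeGroup α) : Prop :=
  ∃ (g r : FreeGroup α) (ε : ℤ), r ∈ rels ∧ (ε = 1 ∨ ε = -1) ∧ x = g * r ^ ε * g⁻¹

theorem IsConjRelator.conj {rels : Set (FreeGroup α)} {x : FreeGroup α}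
    (h : IsConjRelator rels x) (g : FreeGroup α) : IsConjRelator rels (g * x * g⁻¹) := by
  obtain ⟨g', r, ε, hr, hε, rfl⟩ := h
  exact ⟨g * g', r, ε, hr, hε, by group⟩

theorem IsConjRelator.map_or_eq_one {rels : Set (FreeGroup α)} {rels' : Set (FreeGroup γ)}
    {φ : FreeGroup α →* FreeGroup γ} (hφ : ∀ r ∈ rels, φ r ∈ rels' ∨ φ r = 1)
    {x : FreeGroup α} (h : IsConjRelator rels x) : IsConjRelator rels' (φ x) ∨ φ x = 1 := by
  obtain ⟨g, r, ε, hr, hε, rfl⟩ := h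
  rcases hφ r hr with hr' | hr'
  · exact Or.inl ⟨φ g, φ r, ε, hr', hε, by simp⟩
  · exact Or.inr (by simp [hr'])

theorem areaRep_iff_exists_list {rels : Set (FreeGroup α)} {w : FreeGroup α} {k : ℕ} :
    AreaRep rels w k ↔
      ∃ L : List (FreeGroup α), L.length = k ∧ (∀ x ∈ L, IsConjRelator rels x) ∧ w = L.prod := by
  constructor
  · rintro ⟨f, r, ε, hr, hε, rfl⟩
    refine ⟨_, List.length_ofFn, fun x hx => ?_, rfl⟩
    obtain ⟨i, rfl⟩ := List.mem_ofFn.1 hx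
    exact ⟨f i, r i, ε i, hr i, hε i, rfl⟩
  · rintro ⟨L, rfl, hL, rfl⟩
    choose g r ε hr hε hx using fun i : Fin L.length => hL (L.get i) (L.get_mem i)
    refine ⟨g, r, ε, hr, hε, congrArg List.prod (List.ext_get (by simp) fun i h _ => ?_)⟩
    simpa using hx ⟨i, h⟩

namespace AreaRep

variable {rels : Set (FreeGroup α)} {w w' : FreeGroup α} {k k' : ℕ}

theorem one (rels : Set (FreeGroup α)) : AreaRep rels 1 0 :=
  areaRep_iff_exists_list.2 ⟨[], rfl, by simp, rfl⟩

theorem of_isConjRelator (h : IsConjRelator rels w) : AreaRep rels w 1 :=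
  areaRep_iff_exists_list.2 ⟨[w], rfl, by simpa using h, by simp⟩

theorem mul (h : AreaRep rels w k) (h' : AreaRep rels w' k') :
    AreaRep rels (w * w') (k + k') := by
  obtain ⟨L, rfl, hL, rfl⟩ := areaRep_iff_exists_list.1 h
  obtain ⟨L', rfl, hL', rfl⟩ := areaRep_iff_exists_list.1 h'
  refine areaRep_iff_exists_list.2 ⟨L ++ L', List.length_append, ?_, List.prod_append.symm⟩
  simp only [List.mem_append]
  rintro x (hx | hx)
  exacts [hL x hx, hL' x hx]

theorem conj (h : AreaRep rels w k) (g : FreeGroup α) : AreaRep rels (g * w * g⁻¹) k := by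
  obtain ⟨L, rfl, hL, rfl⟩ := areaRep_iff_exists_list.1 h
  refine areaRep_iff_exists_list.2 ⟨L.map (MulAut.conj g), List.length_map _, ?_, ?_⟩
  · simp only [List.mem_map]
    rintro _ ⟨x, hx, rfl⟩
    exact (hL x hx).conj g
  · exact map_list_prod (MulAut.conj g) L

theorem exists_map_le {rels' : Set (FreeGroup γ)} (φ : FreeGroup α →* FreeGroup γ)
    (hφ : ∀ r ∈ rels, φ r ∈ rels' ∨ φ r = 1) (h : AreaRep rels w k) :
    ∃ k' ≤ k, AreaRep rels' (φ w) k' := by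
  obtain ⟨L, rfl, hL, rfl⟩ := areaRep_iff_exists_list.1 h
  clear h
  induction L with
  | nil => exact ⟨0, le_rfl, by simpa using one rels'⟩
  | cons x L ih =>
    obtain ⟨k', hk', hrep⟩ := ih fun y hy => hL y (List.mem_cons_of_mem x hy)
    rw [List.prod_cons, φ.map_mul, List.length_cons]
    rcases (hL x List.mem_cons_self).map_or_eq_one hφ with hx | hx
    · exact ⟨1 + k', by omega, (of_isConjRelator hx).mul hrep⟩
    · exact ⟨k', by omega, by rwa [hx, one_mul]⟩

theorem gArea (h : AreaRep rels w k) : AreaRep rels w (GArea rels w) :=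
  Nat.sInf_mem (s := {k | AreaRep rels w k}) ⟨k, h⟩

theorem gArea_le (h : AreaRep rels w k) : GArea rels w ≤ k :=
  Nat.sInf_le h

theorem commutator_list_prod {y : FreeGroup α} (L : List (FreeGroup α))
    (hL : ∀ x ∈ L, IsConjRelator rels ⁅y, x⁆) : AreaRep rels ⁅y, L.prod⁆ L.length := by
  induction L with
  | nil => simpa using one rels
  | cons x L ih =>
    have hsplit : ⁅y, (x :: L).prod⁆ = ⁅y, x⁆ * (x * ⁅y, L.prod⁆ * x⁻¹) := by
      simp only [List.prod_cons, commutatorElement_def]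
      group
    rw [hsplit, List.length_cons, add_comm]
    exact (of_isConjRelator (hL x List.mem_cons_self)).mul
      ((ih fun z hz => hL z (List.mem_cons_of_mem x hz)).conj x)

end AreaRep

namespace FreeGroup

theorem mk_cons (x : α) (d : Bool) (L : List (α × Bool)) :
    mk ((x, d) :: L) = cond d (of x) (of x)⁻¹ * mk L := by
  cases d <;> rfl

def sumFst : FreeGroup (α ⊕ β) →* FreeGroup α :=
  lift (Sum.elim of 1)

def sumSnd : FreeGroup (α ⊕ β) →* FreeGroup β :=
  lift (Sum.elim 1 of)

@[simp] theorem sumFst_of_inl (a : α) : sumFst (of (Sum.inl a) : FreeGroup (α ⊕ β)) = of a := by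
  simp [sumFst]

@[simp] theorem sumFst_of_inr (b : β) : sumFst (of (Sum.inr b) : FreeGroup (α ⊕ β)) = 1 := by
  simp [sumFst]

@[simp] theorem sumSnd_of_inl (a : α) : sumSnd (of (Sum.inl a) : FreeGroup (α ⊕ β)) = 1 := by
  simp [sumSnd]

@[simp] theorem sumSnd_of_inr (b : β) : sumSnd (of (Sum.inr b) : FreeGroup (α ⊕ β)) = of b := by
  simp [sumSnd]

@[simp] theorem sumFst_map_inl (u : FreeGroup α) :
    sumFst (map Sum.inl u : FreeGroup (α ⊕ β)) = u :=
  DFunLike.congr_fun (ext_hom (sumFst.comp (map Sum.inl)) (MonoidHom.id _) fun a => by simp) u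

@[simp] theorem sumFst_map_inr (v : FreeGroup β) :
    sumFst (map Sum.inr v : FreeGroup (α ⊕ β)) = 1 :=
  DFunLike.congr_fun (ext_hom (sumFst.comp (map Sum.inr)) 1 fun b => by simp) v

@[simp] theorem sumSnd_map_inl (u : FreeGroup α) :
    sumSnd (map Sum.inl u : FreeGroup (α ⊕ β)) = 1 :=
  DFunLike.congr_fun (ext_hom (sumSnd.comp (map Sum.inl)) 1 fun a => by simp) u

@[simp] theorem sumSnd_map_inr (v : FreeGroup β) :
    sumSnd (map Sum.inr v : FreeGroup (α ⊕ β)) = v :=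
  DFunLike.congr_fun (ext_hom (sumSnd.comp (map Sum.inr)) (MonoidHom.id _) fun b => by simp) v

def sumSort (w : FreeGroup (α ⊕ β)) : FreeGroup (α ⊕ β) :=
  map Sum.inl (sumFst w) * map Sum.inr (sumSnd w)

variable [DecidableEq α] [DecidableEq β]

theorem norm_lift_le {f : α → FreeGroup β} (hf : ∀ a, norm (f a) ≤ 1) (w : FreeGroup α) :
    norm (lift f w) ≤ norm w := by
  suffices ∀ L : List (α × Bool), norm (lift f (mk L)) ≤ L.length by
    have hw := this w.toWord
    rwa [mk_toWord] at hw
  intro L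
  rw [lift_mk]
  induction L with
  | nil => simp
  | cons x L ih =>
    have hx : norm (cond x.2 (f x.1) (f x.1)⁻¹) ≤ 1 := by cases x.2 <;> simp [hf]
    rw [List.map_cons, List.prod_cons, List.length_cons]
    exact (norm_mul_le _ _).trans (by omega)

theorem norm_sumFst_le (w : FreeGroup (α ⊕ β)) : norm (sumFst w) ≤ norm w :=
  norm_lift_le (by rintro (a | b) <;> simp) w

theorem norm_sumSnd_le (w : FreeGroup (α ⊕ β)) : norm (sumSnd w) ≤ norm w :=
  norm_lift_le (by rintro (a | b) <;> simp) w

end FreeGroup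

namespace ProdRels

variable {R : Set (FreeGroup α)} {S : Set (FreeGroup β)}

theorem map_inl_mem {r : FreeGroup α} (hr : r ∈ R) : map Sum.inl r ∈ ProdRels α β R S :=
  Or.inl (Or.inl ⟨r, hr, rfl⟩)

theorem map_inr_mem {s : FreeGroup β} (hs : s ∈ S) : map Sum.inr s ∈ ProdRels α β R S :=
  Or.inl (Or.inr ⟨s, hs, rfl⟩)

theorem commutator_mem (a : α) (b : β) :
    ⁅(of (Sum.inl a) : FreeGroup (α ⊕ β)), of (Sum.inr b)⁆ ∈ ProdRels α β R S :=
  Or.inr ⟨a, b, rfl⟩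

theorem sumFst_mem_or_eq_one {r : FreeGroup (α ⊕ β)} (hr : r ∈ ProdRels α β R S) :
    sumFst r ∈ R ∨ sumFst r = 1 := by
  rcases hr with (⟨r, hr, rfl⟩ | ⟨s, -, rfl⟩) | ⟨a, b, rfl⟩
  · simpa using Or.inl hr
  · simp
  · simp

theorem sumSnd_mem_or_eq_one {r : FreeGroup (α ⊕ β)} (hr : r ∈ ProdRels α β R S) :
    sumSnd r ∈ S ∨ sumSnd r = 1 := by
  rcases hr with (⟨r, -, rfl⟩ | ⟨s, hs, rfl⟩) | ⟨a, b, rfl⟩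
  · simp
  · simpa using Or.inl hs
  · simp

theorem exists_areaRep_sumFst {w : FreeGroup (α ⊕ β)} {k : ℕ}
    (hw : AreaRep (ProdRels α β R S) w k) : ∃ k' ≤ k, AreaRep R (sumFst w) k' :=
  hw.exists_map_le _ fun _ => sumFst_mem_or_eq_one

theorem exists_areaRep_sumSnd {w : FreeGroup (α ⊕ β)} {k : ℕ}
    (hw : AreaRep (ProdRels α β R S) w k) : ∃ k' ≤ k, AreaRep S (sumSnd w) k' :=
  hw.exists_map_le _ fun _ => sumSnd_mem_or_eq_one

theorem isConjRelator_commutator_letters (a : α) (b : β) (d e : Bool) :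
    IsConjRelator (ProdRels α β R S)
      ⁅(cond e (of (Sum.inr b)) (of (Sum.inr b))⁻¹ : FreeGroup (α ⊕ β)),
        cond d (of (Sum.inl a)) (of (Sum.inl a))⁻¹⁆ := by
  set A : FreeGroup (α ⊕ β) := of (Sum.inl a)
  set B : FreeGroup (α ⊕ β) := of (Sum.inr b)
  have hK : ⁅A, B⁆ ∈ ProdRels α β R S := commutator_mem a b
  cases d <;> cases e <;> simp only [cond_false, cond_true, commutatorElement_def] at hK ⊢
  · exact ⟨B⁻¹ * A⁻¹, _, -1, hK, Or.inr rfl, by group⟩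
  · exact ⟨A⁻¹, _, 1, hK, Or.inl rfl, by group⟩
  · exact ⟨B⁻¹, _, 1, hK, Or.inl rfl, by group⟩
  · exact ⟨1, _, -1, hK, Or.inr rfl, by group⟩

variable [DecidableEq α]

theorem areaRep_commutator_map_inl (b : β) (e : Bool) (v : FreeGroup α) :
    AreaRep (ProdRels α β R S)
      ⁅(cond e (of (Sum.inr b)) (of (Sum.inr b))⁻¹ : FreeGroup (α ⊕ β)), map Sum.inl v⁆
      v.norm := by
  have hv : (map Sum.inl v : FreeGroup (α ⊕ β)) =
      (v.toWord.map fun x => cond x.2 (of (Sum.inl x.1)) (of (Sum.inl x.1))⁻¹).prod := by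
    conv_lhs => rw [← mk_toWord (x := v)]
    rw [map_eq_lift, lift_mk]
    rfl
  rw [hv]
  convert AreaRep.commutator_list_prod _ fun x hx => ?_ using 1
  · simp [FreeGroup.norm]
  · obtain ⟨⟨a, d⟩, -, rfl⟩ := List.mem_map.1 hx
    exact isConjRelator_commutator_letters a b d e

variable [DecidableEq β]

theorem exists_areaRep_mul_sumSort_inv (w : FreeGroup (α ⊕ β)) :
    ∃ k ≤ w.norm ^ 2, AreaRep (ProdRels α β R S) (w * (sumSort w)⁻¹) k := by
  suffices ∀ L, ∃ k ≤ L.length ^ 2, AreaRep (ProdRels α β R S) (mk L * (sumSort (mk L))⁻¹) k by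
    have hw := this w.toWord
    rwa [mk_toWord] at hw
  intro L
  induction L with
  | nil => exact ⟨0, le_rfl, by simpa [← one_eq_mk, sumSort] using AreaRep.one _⟩
  | cons x L ih =>
    obtain ⟨k, hk, hrep⟩ := ih
    have hL : (sumFst (mk L)).norm ≤ L.length := (norm_sumFst_le _).trans norm_mk_le
    obtain ⟨a | b, d⟩ := x
    · refine ⟨k, by simp only [List.length_cons]; nlinarith, ?_⟩
      convert hrep.conj (cond d (of (Sum.inl a)) (of (Sum.inl a))⁻¹) using 1
      cases d <;> simp [mk_cons, sumSort] <;> group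
    · refine ⟨k + (sumFst (mk L)).norm, by simp only [List.length_cons]; nlinarith, ?_⟩
      convert (hrep.conj (cond d (of (Sum.inr b)) (of (Sum.inr b))⁻¹)).mul
        (areaRep_commutator_map_inl b d (sumFst (mk L))) using 1
      cases d <;> simp [mk_cons, sumSort, commutatorElement_def] <;> group

theorem gArea_le {w : FreeGroup (α ⊕ β)} {k : ℕ} (hw : AreaRep (ProdRels α β R S) w k) :
    GArea (ProdRels α β R S) w ≤ GArea R (sumFst w) + GArea S (sumSnd w) + w.norm ^ 2 := by
  obtain ⟨kw, hkw, hdefect⟩ := exists_areaRep_mul_sumSort_inv (R := R) (S := S) w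
  obtain ⟨_, -, hfst⟩ := exists_areaRep_sumFst hw
  obtain ⟨_, -, hsnd⟩ := exists_areaRep_sumSnd hw
  obtain ⟨kR, hkR, hR⟩ :=
    hfst.gArea.exists_map_le (map Sum.inl) fun _ hr => Or.inl (map_inl_mem hr)
  obtain ⟨kS, hkS, hS⟩ :=
    hsnd.gArea.exists_map_le (map Sum.inr) fun _ hs => Or.inl (map_inr_mem hs)
  have hsplit : AreaRep (ProdRels α β R S) w (kw + kR + kS) := by
    convert (hdefect.mul hR).mul hS using 1
    simp only [sumSort]
    group
  exact hsplit.gArea_le.trans (by omega)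

end ProdRels

theorem gArea_le_dehnFunction [Finite α] [DecidableEq α] {rels : Set (FreeGroup α)}
    {w : FreeGroup α} {n : ℕ} (hn : w.norm ≤ n) (hw : ∃ k, AreaRep rels w k) :
    GArea rels w ≤ DehnFunction α rels n := by
  refine le_csSup ?_ ⟨w, hn, hw, rfl⟩
  have hfin : {w : FreeGroup α | w.toWord.length ≤ n}.Finite :=
    (List.finite_length_le _ n).preimage toWord_injective.injOn
  refine (hfin.image (GArea rels)).bddAbove.mono ?_
  rintro _ ⟨w, hw, -, rfl⟩
  exact ⟨w, hw, rfl⟩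

theorem dehn_product_upper_general (α β : Type) [Finite α] [Finite β]
    [DecidableEq α] [DecidableEq β]
    (R : Set (FreeGroup α)) (S : Set (FreeGroup β)) :
    DehnPreceq (DehnFunction (α ⊕ β) (ProdRels α β R S))
      (fun n => n ^ 2 + DehnFunction α R n + DehnFunction β S n) := by
  refine ⟨1, one_pos, fun n => ?_⟩
  simp only [one_mul]
  refine csSup_le' ?_
  rintro _ ⟨w, hwn, ⟨k, hw⟩, rfl⟩
  obtain ⟨kR, -, hR⟩ := ProdRels.exists_areaRep_sumFst hw
  obtain ⟨kS, -, hS⟩ := ProdRels.exists_areaRep_sumSnd hw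
  have hfst := gArea_le_dehnFunction ((norm_sumFst_le w).trans hwn) ⟨kR, hR⟩
  have hsnd := gArea_le_dehnFunction ((norm_sumSnd_le w).trans hwn) ⟨kS, hS⟩
  have hsq : w.norm ^ 2 ≤ n ^ 2 := Nat.pow_le_pow_left hwn 2
  have := ProdRels.gArea_le hw
  omega

/-- Brick: `δ_{G×H} ≼ n² + δ_G + δ_H` for finitely presented `G`, `H`. -/
theorem dehn_product_upper (α β : Type) [Finite α] [Finite β]
    [DecidableEq α] [DecidableEq β]
    (R : Set (FreeGroup α)) (S : Set (FreeGroup β)) (hR : R.Finite) (hS : S.Finite) :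
    DehnPreceq (DehnFunction (α ⊕ β) (ProdRels α β R S))
      (fun n => n ^ 2 + DehnFunction α R n + DehnFunction β S n) :=
  dehn_product_upper_general α β R S
end

section
/- If G and H are finitely presented groups, then δ_G ≼ δ_{G×H} and δ_H ≼ δ_{G×H}. -/
namespace FreeGroup

variable {α γ : Type*}

theorem norm_map_le [DecidableEq α] [DecidableEq γ] (f : α → γ) (w : FreeGroup α) :
    norm (map f w) ≤ norm w :=
  calc norm (map f w) = norm (mk (w.toWord.map fun x => (f x.1, x.2))) := by
        rw [← map.mk, mk_toWord]
    _ ≤ (w.toWord.map fun x => (f x.1, x.2)).length := norm_mk_le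
    _ = norm w := List.length_map _

theorem finite_setOf_norm_le [Finite α] [DecidableEq α] (n : ℕ) :
    {w : FreeGroup α | norm w ≤ n}.Finite :=
  Set.Finite.of_finite_image ((List.finite_length_le (α × Bool) n).subset
    (by rintro _ ⟨w, hw, rfl⟩; exact hw)) toWord_injective.injOn

end FreeGroup

open FreeGroup

section Area

variable {α γ : Type*} {R : Set (FreeGroup α)} {T : Set (FreeGroup γ)}

def relatorConjugates (rels : Set (FreeGroup α)) : Set (FreeGroup α) :=
  {x | ∃ (g r : FreeGroup α) (ε : ℤ), r ∈ rels ∧ (ε = 1 ∨ ε = -1) ∧ x = g * r ^ ε * g⁻¹}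

theorem areaRep_iff {w : FreeGroup α} {k : ℕ} :
    AreaRep R w k ↔
      ∃ l : List (FreeGroup α),
        l.length = k ∧ (∀ x ∈ l, x ∈ relatorConjugates R) ∧ l.prod = w := by
  constructor
  · rintro ⟨f, r, ε, hr, hε, rfl⟩
    refine ⟨_, List.length_ofFn, ?_, rfl⟩
    intro x hx
    obtain ⟨i, rfl⟩ := List.mem_ofFn.mp hx
    exact ⟨f i, r i, ε i, hr i, hε i, rfl⟩
  · rintro ⟨l, rfl, hl, rfl⟩
    have : ∀ i : Fin l.length, ∃ (g r : FreeGroup α) (ε : ℤ),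
        r ∈ R ∧ (ε = 1 ∨ ε = -1) ∧ l[i] = g * r ^ ε * g⁻¹ := fun i => hl _ (List.getElem_mem _)
    choose f r ε hr hε hl using this
    refine ⟨f, r, ε, hr, hε, ?_⟩
    conv_lhs => rw [← List.ofFn_getElem (xs := l)]
    exact congrArg List.prod (List.ofFn_inj.mpr (funext hl))

theorem AreaRep.map_le (φ : FreeGroup α →* FreeGroup γ) (hφ : ∀ r ∈ R, φ r ∈ T ∨ φ r = 1)
    {w : FreeGroup α} {k : ℕ} (h : AreaRep R w k) : ∃ m ≤ k, AreaRep T (φ w) m := by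
  classical
  obtain ⟨l, rfl, hl, rfl⟩ := areaRep_iff.mp h
  refine ⟨((l.map φ).filter (· != 1)).length, ?_, areaRep_iff.mpr ⟨_, rfl, ?_, ?_⟩⟩
  · exact (List.length_filter_le _ _).trans (List.length_map _).le
  · intro x hx
    obtain ⟨hmap, hx1⟩ := List.mem_filter.mp hx
    obtain ⟨_, hy, rfl⟩ := List.mem_map.mp hmap
    obtain ⟨g, r, ε, hr, hε, rfl⟩ := hl _ hy
    -- a relator sent to `1` would make the whole conjugate trivial
    have hφr : φ r ∈ T := (hφ r hr).resolve_right fun h1 => by simp [h1] at hx1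
    exact ⟨φ g, φ r, ε, hφr, hε, by simp⟩
  · rw [List.prod_filter_bne_one, map_list_prod]

theorem gArea_map_le (φ : FreeGroup α →* FreeGroup γ) (hφ : ∀ r ∈ R, φ r ∈ T ∨ φ r = 1)
    {w : FreeGroup α} (hw : ∃ k, AreaRep R w k) : GArea T (φ w) ≤ GArea R w := by
  obtain ⟨m, hm, hrep⟩ := AreaRep.map_le φ hφ (Nat.sInf_mem hw)
  exact (Nat.sInf_le hrep).trans hm

end Area

theorem bddAbove_areas (γ : Type*) [Finite γ] [DecidableEq γ] (T : Set (FreeGroup γ)) (n : ℕ) :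
    BddAbove {a | ∃ w : FreeGroup γ,
      (FreeGroup.toWord w).length ≤ n ∧ (∃ k, AreaRep T w k) ∧ a = GArea T w} :=
  ((finite_setOf_norm_le n).image (GArea T)).bddAbove.mono
    (by rintro _ ⟨w, hw, _, rfl⟩; exact ⟨w, hw, rfl⟩)

theorem dehnFunction_le_of_retraction {α γ : Type*} [Finite γ] [DecidableEq α] [DecidableEq γ]
    {R : Set (FreeGroup α)} {T : Set (FreeGroup γ)}
    (ι : FreeGroup α →* FreeGroup γ) (π : FreeGroup γ →* FreeGroup α)
    (hπι : ∀ w, π (ι w) = w) (hι : ∀ r ∈ R, ι r ∈ T) (hπ : ∀ t ∈ T, π t ∈ R ∨ π t = 1)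
    (hlen : ∀ w, norm (ι w) ≤ norm w) (n : ℕ) :
    DehnFunction α R n ≤ DehnFunction γ T n := by
  refine csSup_le' ?_
  rintro _ ⟨w, hw, hrep, rfl⟩
  have hιrep : ∃ k, AreaRep T (ι w) k := by
    obtain ⟨k, hk⟩ := hrep
    obtain ⟨m, -, hm⟩ := hk.map_le ι fun r hr => .inl (hι r hr)
    exact ⟨m, hm⟩
  calc GArea R w = GArea R (π (ι w)) := by rw [hπι]
    _ ≤ GArea T (ι w) := gArea_map_le π hπ hιrep
    _ ≤ DehnFunction γ T n :=
      le_csSup (bddAbove_areas γ T n) ⟨ι w, (hlen w).trans hw, hιrep, rfl⟩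

theorem DehnPreceq.of_le {f g : ℕ → ℕ} (h : ∀ n, f n ≤ g n) : DehnPreceq f g :=
  ⟨1, one_pos, fun n => by simp only [one_mul]; have := h n; omega⟩

namespace FreeGroup

variable {α β : Type*}

noncomputable def projInl : FreeGroup (α ⊕ β) →* FreeGroup α :=
  lift (Sum.elim of 1)

noncomputable def projInr : FreeGroup (α ⊕ β) →* FreeGroup β :=
  lift (Sum.elim 1 of)

@[simp]
theorem projInl_map_inl (w : FreeGroup α) : projInl (map (Sum.inl : α → α ⊕ β) w) = w := by
  induction w using FreeGroup.induction_on <;> simp_all [projInl]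

@[simp]
theorem projInl_map_inr (w : FreeGroup β) : projInl (map (Sum.inr : β → α ⊕ β) w) = 1 := by
  induction w using FreeGroup.induction_on <;> simp_all [projInl]

@[simp]
theorem projInr_map_inr (w : FreeGroup β) : projInr (map (Sum.inr : β → α ⊕ β) w) = w := by
  induction w using FreeGroup.induction_on <;> simp_all [projInr]

@[simp]
theorem projInr_map_inl (w : FreeGroup α) : projInr (map (Sum.inl : α → α ⊕ β) w) = 1 := by
  induction w using FreeGroup.induction_on <;> simp_all [projInr]

theorem projInl_mem_or_eq_one {R : Set (FreeGroup α)} {S : Set (FreeGroup β)} :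
    ∀ t ∈ ProdRels α β R S, projInl t ∈ R ∨ projInl t = 1 := by
  rintro t ((⟨r, hr, rfl⟩ | ⟨s, -, rfl⟩) | ⟨a, b, rfl⟩)
  · exact .inl ((projInl_map_inl r).symm ▸ hr)
  · exact .inr (projInl_map_inr s)
  · exact .inr (by simp [projInl])

theorem projInr_mem_or_eq_one {R : Set (FreeGroup α)} {S : Set (FreeGroup β)} :
    ∀ t ∈ ProdRels α β R S, projInr t ∈ S ∨ projInr t = 1 := by
  rintro t ((⟨r, -, rfl⟩ | ⟨s, hs, rfl⟩) | ⟨a, b, rfl⟩)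
  · exact .inr (projInr_map_inl r)
  · exact .inl ((projInr_map_inr s).symm ▸ hs)
  · exact .inr (by simp [projInr])

end FreeGroup

theorem dehn_factors_lower_general (α β : Type) [Finite α] [Finite β]
    [DecidableEq α] [DecidableEq β]
    (R : Set (FreeGroup α)) (S : Set (FreeGroup β)) :
    DehnPreceq (DehnFunction α R) (DehnFunction (α ⊕ β) (ProdRels α β R S)) ∧
    DehnPreceq (DehnFunction β S) (DehnFunction (α ⊕ β) (ProdRels α β R S)) :=
  ⟨.of_le <| dehnFunction_le_of_retraction (map Sum.inl) projInl projInl_map_inl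
      (fun r hr => .inl <| .inl ⟨r, hr, rfl⟩) projInl_mem_or_eq_one (norm_map_le _),
    .of_le <| dehnFunction_le_of_retraction (map Sum.inr) projInr projInr_map_inr
      (fun s hs => .inl <| .inr ⟨s, hs, rfl⟩) projInr_mem_or_eq_one (norm_map_le _)⟩

/-- Brick: `δ_G ≼ δ_{G×H}` and `δ_H ≼ δ_{G×H}` for finitely presented `G`, `H`, where
`G × H` carries the product presentation. -/
theorem dehn_factors_lower (α β : Type) [Finite α] [Finite β]
    [DecidableEq α] [DecidableEq β]
    (R : Set (FreeGroup α)) (S : Set (FreeGroup β)) (hR : R.Finite) (hS : S.Finite) :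
    DehnPreceq (DehnFunction α R) (DehnFunction (α ⊕ β) (ProdRels α β R S)) ∧
    DehnPreceq (DehnFunction β S) (DehnFunction (α ⊕ β) (ProdRels α β R S)) :=
  dehn_factors_lower_general α β R S
end
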